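/- If cp_∞(U, σ, h) holds for a finite configuration σ compatible with U, and σ ⊂ σ∞, then cp_∞(U, σ∞, h) holds for the infinite configuration σ∞. -/
import Mathlib


/-- URM instructions: Zero, Successor, Transfer, Jump (register indices are 1-indexed). -/
inductive Inst : Type
  | Z : ℕ → Inst
  | S : ℕ → Inst
  | T : ℕ → ℕ → Inst
  | J : ℕ → ℕ → ℕ → Inst

/-- A URM program is a finite sequence of instructions (1-indexed). -/
abbrev Pgm := List Inst

/-- An infinite stream-configuration. -/
abbrev Cfg := Stream' ℕ

/-- The `h`-th instruction of `U` (1-indexed). -/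
def inst (U : Pgm) (h : ℕ) : Option Inst := U[h-1]?

/-- Content of register `i` (1-indexed) in an infinite configuration. -/
def reg (σ : Cfg) (i : ℕ) : ℕ := σ.get (i - 1)

/-- Corecursive write of value `v` into register `i` (1-indexed) of a stream-configuration. -/
def write : Cfg → ℕ → ℕ → Cfg
  | σ, 0, _ => σ
  | σ, 1, v => Stream'.cons v σ.tail
  | σ, (i+2), v => Stream'.cons σ.head (write σ.tail (i+1) v)

/-- Zeroing function `zr`: `0 → R_i`. -/
def zr (σ : Cfg) (i : ℕ) : Cfg := write σ i 0

/-- Successor function `sc`: `r_i + 1 → R_i`. -/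
def sc (σ : Cfg) (i : ℕ) : Cfg := write σ i (reg σ i + 1)

/-- Transfer function `mv`: `r_i → R_j`. -/
def mv (σ : Cfg) (i j : ℕ) : Cfg := write σ j (reg σ i)

/-- Inductive big-step convergence predicate `cp_+` on infinite configurations. -/
inductive cpPlus (U : Pgm) : Cfg → ℕ → Cfg → Prop where
  | jf_l {σ h i j k} : inst U h = some (.J i j k) → h = U.length →
      reg σ i ≠ reg σ j → cpPlus U σ h σ
  | jf_r {σ τ h i j k} : inst U h = some (.J i j k) → h < U.length →
      reg σ i ≠ reg σ j → cpPlus U σ (h+1) τ → cpPlus U σ h τ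
  | jt_l {σ h i j k} : inst U h = some (.J i j k) → k = 0 →
      reg σ i = reg σ j → cpPlus U σ h σ
  | jt_r {σ τ h i j k} : inst U h = some (.J i j k) → k ≠ 0 →
      reg σ i = reg σ j → cpPlus U σ k τ → cpPlus U σ h τ
  | z_l {σ τ h i} : inst U h = some (.Z i) → h = U.length →
      τ = zr σ i → cpPlus U σ h τ
  | z_r {σ τ h i} : inst U h = some (.Z i) → h < U.length →
      cpPlus U (zr σ i) (h+1) τ → cpPlus U σ h τ
  | s_l {σ τ h i} : inst U h = some (.S i) → h = U.length →
      τ = sc σ i → cpPlus U σ h τ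
  | s_r {σ τ h i} : inst U h = some (.S i) → h < U.length →
      cpPlus U (sc σ i) (h+1) τ → cpPlus U σ h τ
  | t_l {σ τ h i j} : inst U h = some (.T i j) → h = U.length →
      τ = mv σ i j → cpPlus U σ h τ
  | t_r {σ τ h i j} : inst U h = some (.T i j) → h < U.length →
      cpPlus U (mv σ i j) (h+1) τ → cpPlus U σ h τ

/-- One unfolding of the coinductive divergence rules for the full URM. -/
def cpInfStep (U : Pgm) (R : Cfg → ℕ → Prop) (σ : Cfg) (h : ℕ) : Prop :=
  (∃ i j k, inst U h = some (.J i j k) ∧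
     ((h < U.length ∧ reg σ i ≠ reg σ j ∧ R σ (h+1)) ∨
      (k ≠ 0 ∧ reg σ i = reg σ j ∧ R σ k))) ∨
  (∃ i, inst U h = some (.Z i) ∧ h < U.length ∧ R (zr σ i) (h+1)) ∨
  (∃ i, inst U h = some (.S i) ∧ h < U.length ∧ R (sc σ i) (h+1)) ∨
  (∃ i j, inst U h = some (.T i j) ∧ h < U.length ∧ R (mv σ i j) (h+1))

/-- Coinductive divergence predicate `cp_∞` on infinite configurations
(greatest fixpoint of the rules). -/
def cpInf (U : Pgm) (σ : Cfg) (h : ℕ) : Prop :=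
  ∃ R : Cfg → ℕ → Prop, R σ h ∧ ∀ σ' h', R σ' h' → cpInfStep U R σ' h'


/-- A finite list-configuration; register `i` (1-indexed) holds `areg σ i`. -/
abbrev FCfg := List ℕ

/-- Content of register `i` (1-indexed) in a finite configuration. -/
def areg (σ : FCfg) (i : ℕ) : ℕ := σ.getD (i - 1) 0

/-- Zeroing on finite configurations. -/
def zrL (σ : FCfg) (i : ℕ) : FCfg := σ.set (i - 1) 0

/-- Successor on finite configurations. -/
def scL (σ : FCfg) (i : ℕ) : FCfg := σ.set (i - 1) (areg σ i + 1)

/-- Transfer on finite configurations. -/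
def mvL (σ : FCfg) (i j : ℕ) : FCfg := σ.set (j - 1) (areg σ i)

/-- Inductive convergence predicate `cp_+` on finite configurations. -/
inductive cpPlusL (U : Pgm) : FCfg → ℕ → FCfg → Prop where
  | jf_l {σ h i j k} : inst U h = some (.J i j k) → h = U.length →
      areg σ i ≠ areg σ j → cpPlusL U σ h σ
  | jf_r {σ τ h i j k} : inst U h = some (.J i j k) → h < U.length →
      areg σ i ≠ areg σ j → cpPlusL U σ (h+1) τ → cpPlusL U σ h τ
  | jt_l {σ h i j k} : inst U h = some (.J i j k) → k = 0 →
      areg σ i = areg σ j → cpPlusL U σ h σ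
  | jt_r {σ τ h i j k} : inst U h = some (.J i j k) → k ≠ 0 →
      areg σ i = areg σ j → cpPlusL U σ k τ → cpPlusL U σ h τ
  | z_l {σ τ h i} : inst U h = some (.Z i) → h = U.length →
      τ = zrL σ i → cpPlusL U σ h τ
  | z_r {σ τ h i} : inst U h = some (.Z i) → h < U.length →
      cpPlusL U (zrL σ i) (h+1) τ → cpPlusL U σ h τ
  | s_l {σ τ h i} : inst U h = some (.S i) → h = U.length →
      τ = scL σ i → cpPlusL U σ h τ
  | s_r {σ τ h i} : inst U h = some (.S i) → h < U.length →
      cpPlusL U (scL σ i) (h+1) τ → cpPlusL U σ h τ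
  | t_l {σ τ h i j} : inst U h = some (.T i j) → h = U.length →
      τ = mvL σ i j → cpPlusL U σ h τ
  | t_r {σ τ h i j} : inst U h = some (.T i j) → h < U.length →
      cpPlusL U (mvL σ i j) (h+1) τ → cpPlusL U σ h τ

/-- One unfolding of the coinductive divergence rules, finite configurations. -/
def cpInfStepL (U : Pgm) (R : FCfg → ℕ → Prop) (σ : FCfg) (h : ℕ) : Prop :=
  (∃ i j k, inst U h = some (.J i j k) ∧
     ((h < U.length ∧ areg σ i ≠ areg σ j ∧ R σ (h+1)) ∨
      (k ≠ 0 ∧ areg σ i = areg σ j ∧ R σ k))) ∨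
  (∃ i, inst U h = some (.Z i) ∧ h < U.length ∧ R (zrL σ i) (h+1)) ∨
  (∃ i, inst U h = some (.S i) ∧ h < U.length ∧ R (scL σ i) (h+1)) ∨
  (∃ i j, inst U h = some (.T i j) ∧ h < U.length ∧ R (mvL σ i j) (h+1))

/-- Coinductive divergence predicate `cp_∞` on finite configurations. -/
def cpInfL (U : Pgm) (σ : FCfg) (h : ℕ) : Prop :=
  ∃ R : FCfg → ℕ → Prop, R σ h ∧ ∀ σ' h', R σ' h' → cpInfStepL U R σ' h'

/-- An instruction references only registers in `[1..m]` and jump targets `≤ n`. -/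
def instOK (m n : ℕ) : Inst → Prop
  | .Z i => 1 ≤ i ∧ i ≤ m
  | .S i => 1 ≤ i ∧ i ≤ m
  | .T i j => 1 ≤ i ∧ i ≤ m ∧ 1 ≤ j ∧ j ≤ m
  | .J i j k => 1 ≤ i ∧ i ≤ m ∧ 1 ≤ j ∧ j ≤ m ∧ k ≤ n

/-- Standard form: every jump target is `≤ n`. -/
def StandardForm (U : Pgm) : Prop :=
  ∀ I ∈ U, ∀ i j k, I = Inst.J i j k → k ≤ U.length

/-- Compatibility `σ ⊨ U` of a finite configuration with a program. -/
def Compatible (σ : FCfg) (U : Pgm) : Prop :=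
  StandardForm U ∧ ∀ I ∈ U, instOK σ.length U.length I

/-- Inclusion `σ ⊂ τ∞` of a finite configuration in an infinite one. -/
def Incl (σ : FCfg) (τ : Cfg) : Prop :=
  (∀ ι, 1 ≤ ι → ι ≤ σ.length → reg τ ι = areg σ ι) ∧
  (∀ ι, σ.length < ι → reg τ ι = 0)

/-- Maximal register index referenced by an instruction. -/
def maxReg : Inst → ℕ
  | .Z i => i
  | .S i => i
  | .T i j => max i j
  | .J i j _ => max i j

/-- `ρ(U)`: maximal register index affected by the program `U`. -/
def rho (U : Pgm) : ℕ := (U.map maxReg).foldr max 0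

/-- Restriction `σ∞|U` of an infinite configuration to the first `ρ(U)` registers. -/
def restrict (σ : Cfg) (U : Pgm) : FCfg := Stream'.take (rho U) σ

lemma write_get (τ : Cfg) (n v m : ℕ) :
    (write τ (n+1) v).get m = if m = n then v else τ.get m := by
  induction n generalizing τ m with
  | zero =>
    show (Stream'.cons v τ.tail).get m = _
    cases m with
    | zero => rfl
    | succ m =>
      show Stream'.get τ.tail m = _
      simp [Stream'.get_tail]
  | succ n ih =>
    show (Stream'.cons τ.head (write τ.tail (n+1) v)).get m = _
    cases m with
    | zero => rfl
    | succ m =>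
      show (write τ.tail (n+1) v).get m = _
      rw [ih]
      simp [Stream'.get_tail, Nat.succ_inj]

lemma reg_write (τ : Cfg) (i v ι : ℕ) (hi : 1 ≤ i) (hι : 1 ≤ ι) :
    reg (write τ i v) ι = if ι = i then v else reg τ ι := by
  obtain ⟨n, rfl⟩ := Nat.exists_eq_add_of_le hi
  obtain ⟨m, rfl⟩ := Nat.exists_eq_add_of_le hι
  simp only [reg, Nat.add_comm 1, write_get]
  simp [Nat.add_sub_cancel]

lemma areg_set (σ : FCfg) (i v ι : ℕ) (hi : 1 ≤ i) (hile : i ≤ σ.length)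
    (hι : 1 ≤ ι) :
    areg (σ.set (i-1) v) ι = if ι = i then v else areg σ ι := by
  simp only [areg, List.getD_eq_getElem?_getD, List.getElem?_set]
  split_ifs with h1 h2 h2 <;> simp_all <;> omega

lemma Incl.write' {σ : FCfg} {τ : Cfg} (hσ : Incl σ τ) {i : ℕ} (v : ℕ)
    (hi : 1 ≤ i) (hile : i ≤ σ.length) :
    Incl (σ.set (i-1) v) (write τ i v) := by
  constructor
  · intro ι h1 h2
    rw [List.length_set] at h2
    rw [reg_write τ i v ι hi h1, areg_set σ i v ι hi hile h1]
    split_ifs with hc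
    · rfl
    · exact hσ.1 ι h1 h2
  · intro ι hgt
    rw [List.length_set] at hgt
    rw [reg_write τ i v ι hi (by omega)]
    rw [if_neg (by omega)]
    exact hσ.2 ι hgt

lemma Compatible.set {σ : FCfg} {U : Pgm} (h : Compatible σ U) (n v : ℕ) :
    Compatible (σ.set n v) U := by
  obtain ⟨h1, h2⟩ := h
  exact ⟨h1, by simpa [List.length_set] using h2⟩

lemma inst_mem {U : Pgm} {h : ℕ} {I : Inst} (hi : inst U h = some I) : I ∈ U := by
  unfold inst at hi
  have hn : h - 1 < U.length := by
    by_contra hc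
    rw [List.getElem?_eq_none (by omega)] at hi; simp at hi
  have : U[h-1] = I := by
    rw [List.getElem?_eq_getElem hn] at hi; exact Option.some.inj hi
  exact this ▸ U.getElem_mem hn

/-- if `cp_∞(U, σ, h)` holds for a finite configuration `σ` compatible
with `U`, and `σ ⊂ σ∞`, then `cp_∞(U, σ∞, h)` holds. -/
theorem cpInf_of_finite (U : Pgm) (σ : FCfg) (h : ℕ) (σinf : Cfg)
    (heval : cpInfL U σ h) (hcomp : Compatible σ U) (hσ : Incl σ σinf) :
    cpInf U σinf h := by
  obtain ⟨R, hR, hstep⟩ := heval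
  refine ⟨fun τ h' => ∃ σ', R σ' h' ∧ Compatible σ' U ∧ Incl σ' τ,
    ⟨σ, hR, hcomp, hσ⟩, ?_⟩
  rintro τ h' ⟨σ', hR', hcomp', hincl'⟩
  rcases hstep σ' h' hR' with
      ⟨i, j, k, hi, hcase⟩ | ⟨i, hi, hlt, hr⟩ | ⟨i, hi, hlt, hr⟩ | ⟨i, j, hi, hlt, hr⟩
  · -- Jump
    have hok := hcomp'.2 _ (inst_mem hi) 
    obtain ⟨h1i, h2i, h1j, h2j, _⟩ := hok
    have ei : reg τ i = areg σ' i := hincl'.1 i h1i h2i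
    have ej : reg τ j = areg σ' j := hincl'.1 j h1j h2j
    refine Or.inl ⟨i, j, k, hi, ?_⟩
    rcases hcase with ⟨hlt, hne, hr⟩ | ⟨hk, heq, hr⟩
    · exact Or.inl ⟨hlt, by rw [ei, ej]; exact hne, σ', hr, hcomp', hincl'⟩
    · exact Or.inr ⟨hk, by rw [ei, ej, heq], σ', hr, hcomp', hincl'⟩
  · -- Zero
    obtain ⟨h1i, h2i⟩ := hcomp'.2 _ (inst_mem hi)
    exact Or.inr <| Or.inl ⟨i, hi, hlt,
      zrL σ' i, hr, hcomp'.set _ _, hincl'.write' 0 h1i h2i⟩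
  · -- Succ
    obtain ⟨h1i, h2i⟩ := hcomp'.2 _ (inst_mem hi)
    have ei : reg τ i = areg σ' i := hincl'.1 i h1i h2i
    refine Or.inr <| Or.inr <| Or.inl ⟨i, hi, hlt,
      scL σ' i, hr, hcomp'.set _ _, ?_⟩
    have := hincl'.write' (areg σ' i + 1) h1i h2i
    simpa [sc, scL, ei] using this
  · -- Transfer
    obtain ⟨h1i, h2i, h1j, h2j⟩ := hcomp'.2 _ (inst_mem hi)
    have ei : reg τ i = areg σ' i := hincl'.1 i h1i h2i
    refine Or.inr <| Or.inr <| Or.inr ⟨i, j, hi, hlt,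
      mvL σ' i j, hr, hcomp'.set _ _, ?_⟩
    have := hincl'.write' (areg σ' i) h1j h2j
    simpa [mv, mvL, ei] using this
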